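/- For every real number $\alpha$ with $(\sqrt{7}-1)/2 \leq \alpha \leq (\sqrt{13}-1)/2$ and $\alpha \neq 1$, the function $f_\alpha$ is subadditive on $[0,1]$: for all real $x, y \geq 0$ with $x + y \leq 1$, $f_\alpha(x+y) \leq f_\alpha(x) + f_\alpha(y)$. -/

import Mathlib

/-!
With `u = schmidtMin x`, `f_α(x)` is the binary Rényi entropy of `(u, 1 - u)` and `f_α'(x)` is a
positive multiple of `renyiSlope α u`. Writing `1 - u = u e^(2w)`, the `u`-derivative of
`renyiSlope α` is a negative multiple of `renyiCurvature α w / (1 - α)`. As a function of `α` the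
`sinh`-combination `renyiCurvature α w` is convex on `[1/2, 3/2]`, vanishes at `α = 1` and is
nonpositive at `α = (√13 - 1)/2`, so it has the sign of `1 - α` in between. Hence `f_α'` is
antitone, `f_α` is concave on `[0, 1]`, and a concave function vanishing at `0` is subadditive.
-/

/-- The function expressing the Rényi-α entanglement of a two-qubit state as a function of
its squared concurrence:
`f_α(x) = (1/(1-α)) * log₂ [ ((1-√(1-x))/2)^α + ((1+√(1-x))/2)^α ]`. -/
noncomputable def renyiF (α x : ℝ) : ℝ :=
  (1 / (1 - α)) *
    Real.logb 2 (((1 - Real.sqrt (1 - x)) / 2) ^ α + ((1 + Real.sqrt (1 - x)) / 2) ^ α)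

open Real Set
open scoped Nat

theorem Real.sum_mul_sinh_nonpos {ι : Type*} (s : Finset ι) (c k : ι → ℝ)
    (hc : ∀ n : ℕ, ∑ i ∈ s, c i * k i ^ (2 * n + 1) ≤ 0) {w : ℝ} (hw : 0 ≤ w) :
    ∑ i ∈ s, c i * sinh (k i * w) ≤ 0 := by
  have hsum : HasSum (fun n : ℕ => ∑ i ∈ s, c i * ((k i * w) ^ (2 * n + 1) / (2 * n + 1)!))
      (∑ i ∈ s, c i * sinh (k i * w)) :=
    hasSum_sum fun i _ => (hasSum_sinh _).mul_left (c i)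
  refine hsum.nonpos fun n => ?_
  calc ∑ i ∈ s, c i * ((k i * w) ^ (2 * n + 1) / (2 * n + 1)!)
      = (∑ i ∈ s, c i * k i ^ (2 * n + 1)) * (w ^ (2 * n + 1) / (2 * n + 1)!) := by
        rw [Finset.sum_mul]; congr! 1 with i; rw [mul_pow]; ring
    _ ≤ 0 := mul_nonpos_of_nonpos_of_nonneg (hc n) (by positivity)

theorem ConvexOn.sub_mul_nonneg {s : Set ℝ} {f : ℝ → ℝ} (hf : ConvexOn ℝ s f) {c t p : ℝ}
    (hc : c ∈ s) (ht : t ∈ s) (hp : p ∈ s) (hct : c < t) (hpt : p ≤ t) (hfc : f c = 0)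
    (hft : f t ≤ 0) : 0 ≤ (c - p) * f p := by
  rcases eq_or_ne p c with rfl | hpc
  · simp
  have hslope : f p / (p - c) ≤ 0 := by
    simpa [hfc] using (hf.secant_mono hc hp ht hpc hct.ne' hpt).trans
      (div_nonpos_of_nonpos_of_nonneg (by simpa [hfc] using hft) (sub_nonneg.2 hct.le))
  have hpc' : p - c ≠ 0 := sub_ne_zero.2 hpc
  calc 0 ≤ -(f p / (p - c)) * (p - c) ^ 2 := mul_nonneg (neg_nonneg.2 hslope) (sq_nonneg _)
    _ = (c - p) * f p := by field_simp; ring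

theorem ConcaveOn.map_add_le_add {s : Set ℝ} {f : ℝ → ℝ} (hf : ConcaveOn ℝ s f) (h0 : 0 ∈ s)
    (hf0 : 0 ≤ f 0) {x y : ℝ} (hx : 0 ≤ x) (hy : 0 ≤ y) (hxy : x + y ∈ s) :
    f (x + y) ≤ f x + f y := by
  rcases (add_nonneg hx hy).eq_or_lt with hxy0 | hxy0
  · obtain ⟨rfl, rfl⟩ : x = 0 ∧ y = 0 := ⟨by linarith, by linarith⟩
    simpa using hf0
  have chord : ∀ a b, 0 ≤ a → 0 ≤ b → a + b = x + y →
      a / (x + y) * f (x + y) + b / (x + y) * f 0 ≤ f a := fun a b ha hb hab => by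
    have := hf.2 hxy h0 (div_nonneg ha hxy0.le) (div_nonneg hb hxy0.le)
      (by rw [← add_div, hab, div_self hxy0.ne'])
    simpa [div_mul_cancel₀ _ hxy0.ne'] using this
  have hx' := chord x y hx hy rfl
  have hy' := chord y x hy hx (add_comm y x)
  have hsplit : f (x + y) = x / (x + y) * f (x + y) + y / (x + y) * f (x + y) := by
    rw [← add_mul, ← add_div, div_self hxy0.ne', one_mul]
  nlinarith [mul_nonneg (div_nonneg hx hxy0.le) hf0, mul_nonneg (div_nonneg hy hxy0.le) hf0]

noncomputable def renyiCurvature (p w : ℝ) : ℝ :=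
  (1 - p) * sinh (3 * w) + 3 * sinh ((2 * p - 1) * w) + sinh ((3 - 2 * p) * w)
    - (3 + p) * sinh w

theorem renyiCurvature_one (w : ℝ) : renyiCurvature 1 w = 0 := by
  simp only [renyiCurvature]; ring_nf

/-- In the Taylor series of `renyiCurvature p w` in `w`, the coefficient of `w` vanishes for every
`p` and that of `w³` is a multiple of `(2p - 2)((2p - 1)² + 4(2p - 1) - 9)`: this is where
`(√13 - 1) / 2` comes from. At that `p` all higher coefficients are negative. -/
theorem renyiCurvature_nonpos_sqrt13 {w : ℝ} (hw : 0 ≤ w) :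
    renyiCurvature ((√13 - 1) / 2) w ≤ 0 := by
  set r := √13
  have hr : r ^ 2 = 13 := sq_sqrt (by norm_num)
  have hr0 : 0 ≤ r := sqrt_nonneg _
  have hb : 0 ≤ r - 2 ∧ r - 2 ≤ 3 := ⟨by nlinarith, by nlinarith⟩
  have hc : 0 ≤ 4 - r ∧ 4 - r ≤ 3 := ⟨by nlinarith, by nlinarith⟩
  have key : renyiCurvature ((r - 1) / 2) w = ∑ i, ![(3 - r) / 2, 3, 1, -(r + 5) / 2] i
      * sinh (![3, r - 2, 4 - r, 1] i * w) := by
    simp only [renyiCurvature, Fin.sum_univ_four, Matrix.cons_val]; ring_nf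
  rw [key]
  refine Real.sum_mul_sinh_nonpos _ _ _ (fun n => ?_) hw
  simp only [Fin.sum_univ_four, Matrix.cons_val, one_pow, mul_one]
  rcases n with _ | _ | m
  · ring_nf; nlinarith
  · ring_nf; nlinarith
  · have hN : ∀ x : ℝ, x ^ (2 * (m + 2) + 1) = x ^ (2 * m + 1) * x ^ 4 := fun x => by
      rw [← pow_add]; ring_nf
    simp only [hN]
    have h3 : (0 : ℝ) ≤ 3 ^ (2 * m + 1) := by positivity
    have hb' := pow_le_pow_left₀ hb.1 hb.2 (2 * m + 1)
    have hc' := pow_le_pow_left₀ hc.1 hc.2 (2 * m + 1)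
    have hcoef : 81 * (3 - r) / 2 + 3 * (r - 2) ^ 4 + (4 - r) ^ 4 ≤ 0 := by
      have : (3601 : ℝ) / 1000 ≤ r := by nlinarith
      nlinarith
    nlinarith [mul_le_mul_of_nonneg_right hb' (pow_nonneg hb.1 4),
      mul_le_mul_of_nonneg_right hc' (pow_nonneg hc.1 4), mul_nonpos_of_nonneg_of_nonpos h3 hcoef]

theorem convexOn_renyiCurvature {w : ℝ} (hw : 0 ≤ w) :
    ConvexOn ℝ (Icc (1 / 2) (3 / 2)) (renyiCurvature · w) := by
  have hA : ∀ p, HasDerivAt (fun p => (2 * p - 1) * w) (2 * w) p := fun p => by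
    simpa using (((hasDerivAt_id' p).const_mul 2).sub_const 1).mul_const w
  have hA' : ∀ p, HasDerivAt (fun p => (3 - 2 * p) * w) (-(2 * w)) p := fun p => by
    simpa using (((hasDerivAt_id' p).const_mul 2).const_sub 3).mul_const w
  have hΦ' : ∀ p, HasDerivAt (renyiCurvature · w) (-sinh (3 * w) + 3 * (cosh ((2 * p - 1) * w)
      * (2 * w)) + cosh ((3 - 2 * p) * w) * (-(2 * w)) - sinh w) p := fun p =>
    (((((hasDerivAt_id' p).const_sub 1).mul_const (sinh (3 * w))).fun_add
      ((hA p).sinh.const_mul 3)).fun_add (hA' p).sinh).fun_sub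
      (((hasDerivAt_id' p).const_add 3).mul_const (sinh w)) |>.congr_deriv (by ring)
  have hΦ'' : ∀ p, HasDerivAt (fun p => -sinh (3 * w) + 3 * (cosh ((2 * p - 1) * w)
      * (2 * w)) + cosh ((3 - 2 * p) * w) * (-(2 * w)) - sinh w)
      (4 * w ^ 2 * (3 * sinh ((2 * p - 1) * w) + sinh ((3 - 2 * p) * w))) p := fun p =>
    (((((hA p).cosh.mul_const (2 * w)).const_mul 3).const_add (-sinh (3 * w))).fun_add
      ((hA' p).cosh.mul_const (-(2 * w)))).sub_const (sinh w) |>.congr_deriv (by ring)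
  refine convexOn_of_hasDerivWithinAt2_nonneg (convex_Icc _ _)
    (fun p _ => (hΦ' p).continuousAt.continuousWithinAt) (fun p _ => (hΦ' p).hasDerivWithinAt)
    (fun p _ => (hΦ'' p).hasDerivWithinAt) fun p hp => ?_
  rw [interior_Icc] at hp
  have h1 : 0 ≤ sinh ((2 * p - 1) * w) := sinh_nonneg_iff.2 (by nlinarith [hp.1])
  have h2 : 0 ≤ sinh ((3 - 2 * p) * w) := sinh_nonneg_iff.2 (by nlinarith [hp.2])
  positivity

theorem one_sub_mul_renyiCurvature_nonneg {p w : ℝ} (hp1 : 1 / 2 ≤ p) (hp2 : p ≤ (√13 - 1) / 2)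
    (hw : 0 ≤ w) : 0 ≤ (1 - p) * renyiCurvature p w := by
  have h13 : √13 < 4 := by rw [sqrt_lt' (by norm_num)]; norm_num
  have h13' : 3 < √13 := by rw [lt_sqrt (by norm_num)]; norm_num
  exact (convexOn_renyiCurvature hw).sub_mul_nonneg (c := 1) ⟨by norm_num, by norm_num⟩
    ⟨by linarith, by linarith⟩ ⟨hp1, by linarith⟩ (by linarith) hp2 (renyiCurvature_one w)
    (renyiCurvature_nonpos_sqrt13 hw)

noncomputable def renyiSlope (α u : ℝ) : ℝ :=
  (u ^ (α - 1) - (1 - u) ^ (α - 1)) / ((1 - α) * (1 - 2 * u) * (u ^ α + (1 - u) ^ α))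

theorem deriv_renyiSlope_numerator_eq (p : ℝ) {u v : ℝ} (hu : 0 < u) (hv : 0 < v) :
    (v - u) * (p - 1) * (u ^ (p - 2) + v ^ (p - 2)) * (u ^ p + v ^ p)
      + 2 * (u ^ (p - 1) - v ^ (p - 1)) * (u ^ p + v ^ p)
      - p * (v - u) * (u ^ (p - 1) - v ^ (p - 1)) ^ 2
      = -2 * (u * v) ^ (p - 1 / 2) * renyiCurvature p (log (v / u) / 2) := by
  set w := log (v / u) / 2
  set X := exp w
  set Y := exp (p * w)
  have hX : 0 < X := exp_pos w
  have hY : 0 < Y := exp_pos _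
  have hX2 : exp (2 * w) = X ^ 2 := by rw [sq, ← exp_add]; ring_nf
  have hY2 : exp (2 * (p * w)) = Y ^ 2 := by rw [sq, ← exp_add]; ring_nf
  have hvX : v = u * X ^ 2 := by
    rw [← hX2, show 2 * w = log (v / u) by ring, exp_log (div_pos hv hu)]; field_simp
  have hvp : v ^ p = u ^ p * Y ^ 2 := by
    rw [hvX, mul_rpow hu.le (by positivity), ← hX2, ← exp_mul, ← hY2]; ring_nf
  have huv : (u * v) ^ (p - 1 / 2) = u ^ p * v ^ p / (u * X) := by
    rw [rpow_sub (by positivity), mul_rpow hu.le hv.le, rpow_div_two_eq_sqrt 1 (by positivity),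
      rpow_one, hvX, show u * (u * X ^ 2) = (u * X) ^ 2 by ring, sqrt_sq (by positivity), ← hvX]
  have e3 : exp (3 * w) = X ^ 3 := by rw [← exp_nat_mul]; push_cast; ring_nf
  have e1 : exp ((2 * p - 1) * w) = Y ^ 2 / X := by
    rw [← hY2, ← exp_sub]; ring_nf
  have e2 : exp ((3 - 2 * p) * w) = X ^ 3 / Y ^ 2 := by
    rw [← hY2, ← e3, ← exp_sub]; ring_nf
  simp only [renyiCurvature, sinh_eq, exp_neg, e1, e2, e3, huv, rpow_sub_one hu.ne',
    rpow_sub_one hv.ne', rpow_sub hu, rpow_sub hv, rpow_two, hvp]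
  rw [hvX]
  field_simp
  ring

theorem hasDerivAt_renyiSlope {α u : ℝ} (hα : α ≠ 1) (hu0 : 0 < u) (hu1 : u < 1 / 2) :
    HasDerivAt (renyiSlope α) (-2 * (u * (1 - u)) ^ (α - 1 / 2)
      * renyiCurvature α (log ((1 - u) / u) / 2)
      / ((1 - α) * (1 - 2 * u) ^ 2 * (u ^ α + (1 - u) ^ α) ^ 2)) u := by
  have hv : 0 < 1 - u := by linarith
  have hw : HasDerivAt (fun u : ℝ => 1 - u) (-1) u := by simpa using (hasDerivAt_id' u).const_sub 1
  have hpow := fun p : ℝ => (hasDerivAt_id' u).rpow_const (p := p) (Or.inl hu0.ne')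
  have hpow' := fun p : ℝ => hw.rpow_const (p := p) (Or.inl hv.ne')
  have hα' : 1 - α ≠ 0 := sub_ne_zero.2 (Ne.symm hα)
  have hg : 0 < u ^ α + (1 - u) ^ α := by positivity
  have h2u : 1 - 2 * u ≠ 0 := by linarith
  have := ((hpow (α - 1)).fun_sub (hpow' (α - 1))).fun_div
    ((((hasDerivAt_id' u).const_mul 2).const_sub 1 |>.const_mul (1 - α)).fun_mul
      ((hpow α).fun_add (hpow' α))) (by positivity)
  refine this.congr_deriv ?_
  rw [← deriv_renyiSlope_numerator_eq α hu0 hv, show α - 1 - 1 = α - 2 by ring]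
  field_simp
  ring

theorem renyiSlope_antitoneOn {α : ℝ} (hα1 : 1 / 2 ≤ α) (hα2 : α ≤ (√13 - 1) / 2) (hα : α ≠ 1) :
    AntitoneOn (renyiSlope α) (Ioo 0 (1 / 2)) := by
  have hderiv : ∀ u ∈ Ioo (0 : ℝ) (1 / 2), HasDerivAt (renyiSlope α) _ u :=
    fun u hu => hasDerivAt_renyiSlope hα hu.1 hu.2
  refine antitoneOn_of_deriv_nonpos (convex_Ioo 0 (1 / 2))
    (fun u hu => (hderiv u hu).continuousAt.continuousWithinAt)
    (fun u hu => (hderiv u (interior_subset hu)).differentiableAt.differentiableWithinAt)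
    fun u hu => ?_
  rw [interior_Ioo] at hu
  obtain ⟨hu0, hu1⟩ := hu
  rw [(hderiv u ⟨hu0, hu1⟩).deriv]
  have hv : 0 < 1 - u := by linarith
  have hw : 0 ≤ log ((1 - u) / u) / 2 :=
    div_nonneg (log_nonneg ((one_le_div hu0).2 (by linarith))) zero_le_two
  have hα' : 1 - α ≠ 0 := sub_ne_zero.2 (Ne.symm hα)
  have h2u : 1 - 2 * u ≠ 0 := by linarith
  have hg : 0 < u ^ α + (1 - u) ^ α := by positivity
  rw [show ∀ A Φ : ℝ, -2 * A * Φ / ((1 - α) * (1 - 2 * u) ^ 2 * (u ^ α + (1 - u) ^ α) ^ 2)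
      = -(2 * A * ((1 - α) * Φ) / ((1 - α) ^ 2 * (1 - 2 * u) ^ 2 * (u ^ α + (1 - u) ^ α) ^ 2))
      from fun A Φ => by field_simp]
  exact neg_nonpos.2 (div_nonneg (mul_nonneg (by positivity)
    (one_sub_mul_renyiCurvature_nonneg hα1 hα2 hw)) (by positivity))

/-- The smaller eigenvalue of the reduced state of a pure two-qubit state with squared
concurrence `x`. -/
noncomputable def schmidtMin (x : ℝ) : ℝ := (1 - √(1 - x)) / 2

noncomputable def binaryRenyi (α p : ℝ) : ℝ := 1 / (1 - α) * logb 2 (p ^ α + (1 - p) ^ α)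

theorem renyiF_eq_binaryRenyi (α x : ℝ) : renyiF α x = binaryRenyi α (schmidtMin x) := by
  rw [renyiF, binaryRenyi, schmidtMin]; ring_nf

theorem schmidtMin_mem_Ioo {x : ℝ} (hx0 : 0 < x) (hx1 : x < 1) : schmidtMin x ∈ Ioo 0 (1 / 2) := by
  have h0 : 0 < √(1 - x) := sqrt_pos.2 (by linarith)
  have h1 : √(1 - x) < 1 := by rw [sqrt_lt' one_pos]; linarith
  constructor <;> simp only [schmidtMin] <;> linarith

theorem monotone_schmidtMin : Monotone schmidtMin := fun x y hxy => by
  simp only [schmidtMin]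
  linarith [sqrt_le_sqrt (by linarith : 1 - y ≤ 1 - x)]

theorem hasDerivAt_schmidtMin {x : ℝ} (hx : x < 1) :
    HasDerivAt schmidtMin (1 / (4 * √(1 - x))) x := by
  have h := (((hasDerivAt_id' x).const_sub 1).sqrt (by linarith)).const_sub 1 |>.div_const 2
  refine h.congr_deriv ?_
  field_simp
  ring

theorem hasDerivAt_binaryRenyi {α p : ℝ} (hp0 : 0 < p) (hp1 : p < 1) :
    HasDerivAt (binaryRenyi α) (α * (p ^ (α - 1) - (1 - p) ^ (α - 1))
      / ((1 - α) * log 2 * (p ^ α + (1 - p) ^ α))) p := by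
  have hq : 0 < 1 - p := by linarith
  have hg : 0 < p ^ α + (1 - p) ^ α := by positivity
  have h := (((hasDerivAt_id' p).rpow_const (p := α) (Or.inl hp0.ne')).fun_add
    (((hasDerivAt_id' p).const_sub 1).rpow_const (p := α) (Or.inl hq.ne'))).log hg.ne'
    |>.div_const (log 2) |>.const_mul (1 / (1 - α))
  refine h.congr_deriv ?_
  field_simp
  ring

theorem hasDerivAt_renyiF {α x : ℝ} (hα : α ≠ 1) (hx0 : 0 < x) (hx1 : x < 1) :
    HasDerivAt (renyiF α) (α / (4 * log 2) * renyiSlope α (schmidtMin x)) x := by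
  obtain ⟨hu0, hu1⟩ := schmidtMin_mem_Ioo hx0 hx1
  have h := (hasDerivAt_binaryRenyi (α := α) hu0 (by linarith)).comp x (hasDerivAt_schmidtMin hx1)
  rw [show renyiF α = binaryRenyi α ∘ schmidtMin from funext (renyiF_eq_binaryRenyi α)]
  refine h.congr_deriv ?_
  have hsqrt : √(1 - x) = 1 - 2 * schmidtMin x := by rw [schmidtMin]; ring
  have hα' : 1 - α ≠ 0 := sub_ne_zero.2 (Ne.symm hα)
  have h2u : 1 - 2 * schmidtMin x ≠ 0 := by linarith
  have hg : 0 < schmidtMin x ^ α + (1 - schmidtMin x) ^ α := by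
    have : 0 < 1 - schmidtMin x := by linarith
    positivity
  rw [hsqrt, renyiSlope]
  field_simp

theorem continuousOn_renyiF {α : ℝ} (hα : 0 < α) : ContinuousOn (renyiF α) (Ici 0) := by
  intro x hx
  have hs : √(1 - x) ≤ 1 := sqrt_le_one.2 (by linarith [mem_Ici.1 hx])
  have hpos : 0 < ((1 - √(1 - x)) / 2) ^ α + ((1 + √(1 - x)) / 2) ^ α := by
    have : 0 ≤ (1 - √(1 - x)) / 2 := by linarith
    have : 0 < (1 + √(1 - x)) / 2 := by positivity
    positivity
  refine ContinuousAt.continuousWithinAt ?_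
  unfold renyiF
  fun_prop (disch := first | exact hpos.ne' | exact Or.inr hα.le | norm_num)

theorem renyiF_zero {α : ℝ} (hα : α ≠ 0) : renyiF α 0 = 0 := by
  simp [renyiF, zero_rpow hα]

theorem renyiF_concaveOn {α : ℝ} (hα1 : 1 / 2 ≤ α) (hα2 : α ≤ (√13 - 1) / 2) (hα : α ≠ 1) :
    ConcaveOn ℝ (Icc 0 1) (renyiF α) := by
  have hderiv : ∀ x ∈ Ioo (0 : ℝ) 1, HasDerivAt (renyiF α) _ x :=
    fun x hx => hasDerivAt_renyiF hα hx.1 hx.2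
  refine AntitoneOn.concaveOn_of_deriv (convex_Icc 0 1)
    ((continuousOn_renyiF (by linarith)).mono Icc_subset_Ici_self) ?_ ?_ <;> rw [interior_Icc]
  · exact fun x hx => (hderiv x hx).differentiableAt.differentiableWithinAt
  · intro x hx y hy hxy
    rw [(hderiv x hx).deriv, (hderiv y hy).deriv]
    have hα0 : 0 ≤ α / (4 * log 2) := by positivity
    exact mul_le_mul_of_nonneg_left (renyiSlope_antitoneOn hα1 hα2 hα
      (schmidtMin_mem_Ioo hx.1 hx.2) (schmidtMin_mem_Ioo hy.1 hy.2) (monotone_schmidtMin hxy)) hα0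

/-- For `(√7-1)/2 ≤ α ≤ (√13-1)/2`, `α ≠ 1`, the function `f_α` is subadditive on `[0,1]`:
for `x, y ≥ 0` with `x + y ≤ 1`, `f_α(x+y) ≤ f_α(x) + f_α(y)`. -/
theorem renyiF_subadditive (α : ℝ) (hα1 : (Real.sqrt 7 - 1) / 2 ≤ α)
    (hα2 : α ≤ (Real.sqrt 13 - 1) / 2) (hα : α ≠ 1) :
    ∀ x y : ℝ, 0 ≤ x → 0 ≤ y → x + y ≤ 1 →
      renyiF α (x + y) ≤ renyiF α x + renyiF α y := by
  have h7 : 2 ≤ √7 := by rw [le_sqrt zero_le_two (by norm_num)]; norm_num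
  have hα0 : 1 / 2 ≤ α := by linarith
  intro x y hx hy hxy
  exact (renyiF_concaveOn hα0 hα2 hα).map_add_le_add ⟨le_rfl, zero_le_one⟩
    (renyiF_zero (by linarith)).ge hx hy ⟨by linarith, hxy⟩
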